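/- arXiv:1510.05162 — 3 statements merged into one kernel-verified Lean document; each statement's English description precedes it below -/
import Mathlib

section
/- Let V be a memorizing valuation algebra. Then for all formulas x, y and all H ∈ V: x/(y • x • H) = x/H and x • y • x • H = y • x • H. -/
/-- Formulas over a set of atoms `A`: x ::= T | a | ¬x | x ∧ y. -/
inductive Fm (A : Type) : Type where
  | tru : Fm A
  | atom : A → Fm A
  | neg : Fm A → Fm A
  | con : Fm A → Fm A → Fm A

/-- Trees over `A`: X ::= T | F | X ⊴ a ⊵ X. -/
inductive Tr (A : Type) : Type where
  | tt : Tr A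
  | ff : Tr A
  | node : Tr A → A → Tr A → Tr A

namespace Tr

/-- The substitution X[T ↦ Y, F ↦ Z]. -/
def subst {A : Type} : Tr A → Tr A → Tr A → Tr A
  | tt, Y, _ => Y
  | ff, _, Z => Z
  | node l a r, Y, Z => node (subst l Y Z) a (subst r Y Z)

/-- All leaves of the tree are T. -/
def closedT {A : Type} : Tr A → Prop
  | tt => True
  | ff => False
  | node l _ r => closedT l ∧ closedT r

/-- All leaves of the tree are F. -/
def closedF {A : Type} : Tr A → Prop
  | tt => False
  | ff => True
  | node l _ r => closedF l ∧ closedF r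

/-- A tree is open if it is neither closed by T nor closed by F. -/
def IsOpen {A : Type} (X : Tr A) : Prop := ¬ closedT X ∧ ¬ closedF X

/-- The tree has at least one T leaf. -/
def hasT {A : Type} : Tr A → Prop
  | tt => True
  | ff => False
  | node l _ r => hasT l ∨ hasT r

/-- The tree has at least one F leaf. -/
def hasF {A : Type} : Tr A → Prop
  | tt => False
  | ff => True
  | node l _ r => hasF l ∨ hasF r

end Tr

/-- A formula is constant-free if it contains no occurrence of T. -/
def Fm.constFree {A : Type} : Fm A → Prop
  | .tru => False
  | .atom _ => True
  | .neg x => x.constFree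
  | .con x y => x.constFree ∧ y.constFree

/-- The short-circuit evaluation tree of a formula. -/
def se {A : Type} : Fm A → Tr A
  | .tru => .tt
  | .atom a => .node .tt a .ff
  | .neg x => (se x).subst .ff .tt
  | .con x y => (se x).subst (se y) .ff

/-- A valuation algebra: a nonempty set of valuations together with an
evaluation `/ : 𝒜 × V → Bool` and a derivative `• : 𝒜 × V → V`. -/
structure ValAlg (A : Type) : Type 1 where
  V : Type
  nonempty : Nonempty V
  eval : A → V → Bool
  deriv : A → V → V

namespace ValAlg

variable {A : Type}

/-- Simultaneous extension of evaluation and derivative to formulas: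
`ev u x H = (x/H, x•H)`. -/
def ev (u : ValAlg A) : Fm A → u.V → Bool × u.V
  | .tru, H => (true, H)
  | .atom a, H => (u.eval a H, u.deriv a H)
  | .neg x, H => ((u.ev x H).1.not, (u.ev x H).2)
  | .con x y, H => if (u.ev x H).1 then u.ev y (u.ev x H).2 else (false, (u.ev x H).2)

/-- The evaluation `x/H` of a formula. -/
def fEval (u : ValAlg A) (x : Fm A) (H : u.V) : Bool := (u.ev x H).1

/-- The derivative `x•H` of a formula. -/
def fDeriv (u : ValAlg A) (x : Fm A) (H : u.V) : u.V := (u.ev x H).2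

/-- Repetition-proof valuation algebra: a/(a•H) = a/H. -/
def RepProof (u : ValAlg A) : Prop :=
  ∀ a H, u.eval a (u.deriv a H) = u.eval a H

/-- Contractive: repetition-proof and a•a•H = a•H. -/
def Contractive (u : ValAlg A) : Prop :=
  u.RepProof ∧ ∀ a H, u.deriv a (u.deriv a H) = u.deriv a H

/-- Memorizing: contractive and a/(b•a•H) = a/H, a•b•a•H = b•a•H. -/
def Memorizing (u : ValAlg A) : Prop :=
  u.Contractive ∧
    (∀ a b H, u.eval a (u.deriv b (u.deriv a H)) = u.eval a H) ∧
    (∀ a b H, u.deriv a (u.deriv b (u.deriv a H)) = u.deriv b (u.deriv a H))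

/-- Static: memorizing and a/(b•H) = a/H. -/
def Static (u : ValAlg A) : Prop :=
  u.Memorizing ∧ ∀ a b H, u.eval a (u.deriv b H) = u.eval a H

end ValAlg

/-- Valuation congruence with respect to a valuation algebra. -/
def VCongr {A : Type} (u : ValAlg A) (x y : Fm A) : Prop :=
  ∀ H : u.V, u.fEval x H = u.fEval y H ∧ u.fDeriv x H = u.fDeriv y H

/-- Satisfiability w.r.t. all valuation algebras. -/
def SATfr {A : Type} (x : Fm A) : Prop :=
  ∃ u : ValAlg A, ∃ H : u.V, u.fEval x H = true

/-- Satisfiability w.r.t. repetition-proof valuation algebras. -/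
def SATrp {A : Type} (x : Fm A) : Prop :=
  ∃ u : ValAlg A, u.RepProof ∧ ∃ H : u.V, u.fEval x H = true

/-- Satisfiability w.r.t. contractive valuation algebras. -/
def SATcn {A : Type} (x : Fm A) : Prop :=
  ∃ u : ValAlg A, u.Contractive ∧ ∃ H : u.V, u.fEval x H = true

/-- Satisfiability w.r.t. memorizing valuation algebras. -/
def SATmem {A : Type} (x : Fm A) : Prop :=
  ∃ u : ValAlg A, u.Memorizing ∧ ∃ H : u.V, u.fEval x H = true

/-- Satisfiability w.r.t. static valuation algebras. -/
def SATst {A : Type} (x : Fm A) : Prop :=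
  ∃ u : ValAlg A, u.Static ∧ ∃ H : u.V, u.fEval x H = true

/-- A valuation path: a finite sequence of pairs in 𝒜 × {T, F}. -/
abbrev VPath (A : Type) := List (A × Bool)

/-- The (partial) result `P : X` of a valuation path on a tree. -/
def result {A : Type} [DecidableEq A] : VPath A → Tr A → Option Bool
  | [], .tt => some true
  | [], .ff => some false
  | (u, b) :: Q, .node X₁ a X₂ =>
      if u = a then (if b then result Q X₁ else result Q X₂) else none
  | _ :: _, .tt => none
  | _ :: _, .ff => none
  | [], .node _ _ _ => none

/-- A path is repetition-proof if equal adjacent atoms carry equal values. -/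
def RepProofPath {A : Type} : VPath A → Prop
  | (u, b) :: (v, c) :: t => (u = v → b = c) ∧ RepProofPath ((v, c) :: t)
  | _ => True

/-- A path is memorizing if equal atoms anywhere carry equal values. -/
def MemPath {A : Type} (P : VPath A) : Prop :=
  ∀ u b c, (u, b) ∈ P → (u, c) ∈ P → b = c

/-- Free path-satisfiability. -/
def PathSatFr {A : Type} [DecidableEq A] (x : Fm A) : Prop :=
  ∃ P : VPath A, result P (se x) = some true

/-- Rp-path-satisfiability. -/
def PathSatRp {A : Type} [DecidableEq A] (x : Fm A) : Prop :=
  ∃ P : VPath A, RepProofPath P ∧ result P (se x) = some true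

/-- Mem-path-satisfiability. -/
def PathSatMem {A : Type} [DecidableEq A] (x : Fm A) : Prop :=
  ∃ P : VPath A, MemPath P ∧ result P (se x) = some true

/-- Free path-falsifiability. -/
def PathFalFr {A : Type} [DecidableEq A] (x : Fm A) : Prop :=
  ∃ P : VPath A, result P (se x) = some false

/-- The evaluation path `x ⋄ H`. -/
def ValAlg.epath {A : Type} (u : ValAlg A) : Fm A → u.V → VPath A
  | .tru, _ => []
  | .atom a, H => [(a, u.eval a H)]
  | .neg x, H => u.epath x H
  | .con x y, H =>
      if u.fEval x H then u.epath x H ++ u.epath y (u.fDeriv x H) else u.epath x H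

/-- `lastIdx a P k` is the largest 1-based index `i ≤ min k |P|` with `uᵢ = a`,
or 0 if no such index exists. -/
def lastIdx {A : Type} [DecidableEq A] (a : A) (P : VPath A) : ℕ → ℕ
  | 0 => 0
  | k + 1 => if P[k]?.map Prod.fst = some a then k + 1 else lastIdx a P k

/-- The norm-based constructor `va`; the valuation `i : Fin (|P| + 1)`
represents the 1-based valuation `i + 1` of the paper. -/
def va {A : Type} [DecidableEq A] (P : VPath A) : ValAlg A where
  V := Fin (P.length + 1)
  nonempty := ⟨0⟩
  eval a i :=
    match lastIdx a P (i.1 + 1) with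
    | 0 => false
    | j + 1 => (P[j]?.map Prod.snd).getD false
  deriv a i :=
    if h : i.1 < P.length ∧ P[i.1]?.map Prod.fst = some a
    then ⟨i.1 + 1, by omega⟩ else i

/-- Helper for contraction: `cnAux a Q` drops leading repetitions of `a`. -/
def cnAux {A : Type} [DecidableEq A] : A → VPath A → VPath A
  | _, [] => []
  | a, (u, b) :: Q => if u = a then cnAux a Q else (u, b) :: cnAux u Q

/-- The contraction of a valuation path. -/
def cn {A : Type} [DecidableEq A] : VPath A → VPath A
  | [] => []
  | (u, b) :: Q => (u, b) :: cnAux u Q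

/-- The norm-based constructor `sva`, a trivial valuation algebra. -/
def sva {A : Type} [DecidableEq A] (P : VPath A) : ValAlg A where
  V := PUnit
  nonempty := ⟨PUnit.unit⟩
  eval a _ := decide ((a, true) ∈ P)
  deriv _ H := H

/-!
Call `G` reachable from `H` if it arises from `H` by finitely many atomic derivatives;
every `y • H` is reachable from `H`. By induction on `x`, in a memorizing algebra every
valuation `G` reachable from `x • H` satisfies `x / G = x / H` and `x • G = G`. For an atom
this is the pair of memorizing axioms applied one derivative at a time; for `x ∧ y` with
`x / H = T` the valuation `G` is reachable both from `x • H` and from `y • (x • H)`, so both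
induction hypotheses apply.
-/

namespace ValAlg

variable {A : Type} {u : ValAlg A}

theorem fEval_neg (x : Fm A) (H : u.V) : u.fEval (.neg x) H = !u.fEval x H := rfl

theorem fDeriv_neg (x : Fm A) (H : u.V) : u.fDeriv (.neg x) H = u.fDeriv x H := rfl

theorem fEval_con (x y : Fm A) (H : u.V) :
    u.fEval (.con x y) H = if u.fEval x H then u.fEval y (u.fDeriv x H) else false := by
  unfold fEval fDeriv
  rw [ev]
  split_ifs <;> rfl

theorem fDeriv_con (x y : Fm A) (H : u.V) :
    u.fDeriv (.con x y) H = if u.fEval x H then u.fDeriv y (u.fDeriv x H) else u.fDeriv x H := by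
  unfold fEval fDeriv
  rw [ev]
  split_ifs <;> rfl

def Reach (u : ValAlg A) : u.V → u.V → Prop :=
  Relation.ReflTransGen fun G G' => ∃ b, u.deriv b G = G'

theorem Reach.fDeriv {G G' : u.V} (h : u.Reach G G') (y : Fm A) :
    u.Reach G (u.fDeriv y G') := by
  induction y generalizing G' with
  | tru => exact h
  | atom a => exact h.tail ⟨a, rfl⟩
  | neg x ih => exact ih h
  | con x y ihx ihy =>
    rw [fDeriv_con]
    split
    · exact ihy (ihx h)
    · exact ihx h

theorem reach_fDeriv (y : Fm A) (H : u.V) : u.Reach H (u.fDeriv y H) :=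
  Reach.fDeriv Relation.ReflTransGen.refl y

theorem Memorizing.eval_deriv_of_reach (hu : u.Memorizing) {a : A} {H G : u.V}
    (hG : u.Reach (u.deriv a H) G) : u.eval a G = u.eval a H ∧ u.deriv a G = G := by
  obtain ⟨⟨hrep, hcontr⟩, hmem_eval, hmem_deriv⟩ := hu
  induction hG with
  | refl => exact ⟨hrep a H, hcontr a H⟩
  | tail _ hstep ih =>
    obtain ⟨b, rfl⟩ := hstep
    obtain ⟨heval, hderiv⟩ := ih
    constructor
    · rw [← hderiv, hmem_eval, heval]
    · rw [← hderiv, hmem_deriv, hderiv]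

theorem Memorizing.fEval_fDeriv_of_reach (hu : u.Memorizing) (x : Fm A) {H G : u.V}
    (hG : u.Reach (u.fDeriv x H) G) : u.fEval x G = u.fEval x H ∧ u.fDeriv x G = G := by
  induction x generalizing H with
  | tru => exact ⟨rfl, rfl⟩
  | atom a => exact hu.eval_deriv_of_reach hG
  | neg x ih =>
    obtain ⟨heval, hderiv⟩ := ih hG
    simp only [fEval_neg, fDeriv_neg, heval, hderiv, and_self]
  | con x y ihx ihy =>
    rw [fDeriv_con] at hG
    rw [fEval_con, fEval_con, fDeriv_con]
    cases hx : u.fEval x H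
    · rw [hx] at hG
      obtain ⟨hevalx, hderivx⟩ := ihx hG
      simp only [hevalx, hx, hderivx, Bool.false_eq_true, if_false, and_self]
    · rw [hx, if_pos rfl] at hG
      obtain ⟨hevalx, hderivx⟩ := ihx ((reach_fDeriv y _).trans hG)
      obtain ⟨hevaly, hderivy⟩ := ihy hG
      simp only [hevalx, hx, hderivx, hevaly, hderivy, if_true, and_self]

end ValAlg

/-- In a memorizing valuation algebra, `x/(y•x•H) = x/H` and
`x•y•x•H = y•x•H` for all formulas `x`, `y` and all valuations `H`. -/
theorem stmt_3 {A : Type} (u : ValAlg A) (hu : u.Memorizing) (x y : Fm A) (H : u.V) :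
    u.fEval x (u.fDeriv y (u.fDeriv x H)) = u.fEval x H ∧
    u.fDeriv x (u.fDeriv y (u.fDeriv x H)) = u.fDeriv y (u.fDeriv x H) :=
  hu.fEval_fDeriv_of_reach x (ValAlg.reach_fDeriv y _)
end

section
/- If x is a constant-free formula, then both PathSat_fr(x) and PathFal_fr(x) hold. -/
theorem result_append_subst {A : Type} [DecidableEq A] {X : Tr A} {P : VPath A} {b : Bool}
    (h : result P X = some b) (Q : VPath A) (Y Z : Tr A) :
    result (P ++ Q) (X.subst Y Z) = result Q (if b then Y else Z) := by
  induction X generalizing P with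
  | tt =>
    cases P with
    | nil => cases h; rfl
    | cons p t => simp [result] at h
  | ff =>
    cases P with
    | nil => cases h; rfl
    | cons p t => simp [result] at h
  | node l a r ihl ihr =>
    cases P with
    | nil => simp [result] at h
    | cons p t =>
      obtain ⟨u, c⟩ := p
      by_cases hu : u = a
      · subst hu
        cases c
        · simpa [result, Tr.subst] using ihr (by simpa [result] using h)
        · simpa [result, Tr.subst] using ihl (by simpa [result] using h)
      · simp [result, hu] at h

theorem exists_result_se_of_constFree {A : Type} [DecidableEq A] {x : Fm A} (hx : x.constFree)
    (b : Bool) : ∃ P : VPath A, result P (se x) = some b := by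
  induction x generalizing b with
  | tru => exact hx.elim
  | atom a => exact ⟨[(a, b)], by cases b <;> simp [se, result]⟩
  | neg x ih =>
    obtain ⟨P, hP⟩ := ih hx (!b)
    refine ⟨P ++ [], ?_⟩
    rw [se, result_append_subst hP]
    cases b <;> rfl
  | con x y ihx ihy =>
    cases b with
    | true =>
      obtain ⟨P, hP⟩ := ihx hx.1 true
      obtain ⟨R, hR⟩ := ihy hx.2 true
      exact ⟨P ++ R, by rw [se, result_append_subst hP]; exact hR⟩
    | false =>
      obtain ⟨P, hP⟩ := ihx hx.1 false
      exact ⟨P ++ [], by rw [se, result_append_subst hP]; rfl⟩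

/-- A constant-free formula is both path-satisfiable and
path-falsifiable. -/
theorem stmt_13 {A : Type} [DecidableEq A] (x : Fm A) (hx : x.constFree) :
    PathSatFr x ∧ PathFalFr x :=
  ⟨exists_result_se_of_constFree hx true, exists_result_se_of_constFree hx false⟩
end

section
/- Let V be a valuation algebra, x a formula and H ∈ V. If V is repetition-proof, then the evaluation path x ⋄ H is a repetition-proof valuation path; if V is memorizing, then x ⋄ H is a memorizing valuation path. -/
/-
Both claims go by induction on the formula. Repetition-proofness only has to be checked at the
seam of `(x ⋄ H) · (y ⋄ x•H)`: the first entry of `y ⋄ K` records the value of its atom at `K`,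
and in a repetition-proof algebra the last entry of `x ⋄ H` records the value of its atom at
`x•H`, so equal atoms meet with equal values. For memorizing algebras the invariant is that every
atom `a` occurring in `x ⋄ H` is absorbed by the final valuation, `a•(x•H) = x•H`, and has there
the value recorded in the path; the memorizing laws say exactly that further derivatives preserve
both properties.
-/

theorem repProofPath_iff_isChain {A : Type} :
    ∀ P : VPath A, RepProofPath P ↔ P.IsChain (fun p q => p.1 = q.1 → p.2 = q.2)
  | [] | [_] => by simp [RepProofPath]
  | (_, _) :: (v, c) :: t => by
    rw [RepProofPath, List.isChain_cons_cons, repProofPath_iff_isChain ((v, c) :: t)]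

namespace ValAlg

variable {A : Type} {u : ValAlg A}

theorem fDeriv_eq_self_of_epath_eq_nil {x : Fm A} {H : u.V} (h : u.epath x H = []) :
    u.fDeriv x H = H := by
  induction x generalizing H with
  | tru => rfl
  | atom a => simp [epath] at h
  | neg x ih => exact ih h
  | con x y ihx ihy =>
    rw [fDeriv_con]
    by_cases hx : u.fEval x H
    · simp only [epath, hx, if_true, List.append_eq_nil_iff] at h
      rw [if_pos hx, ihx h.1, ihy (ihx h.1 ▸ h.2)]
    · simp only [epath, hx] at h
      simpa [hx] using ihx h

theorem eval_of_mem_head?_epath {x : Fm A} {H : u.V} {p : A × Bool}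
    (hp : p ∈ (u.epath x H).head?) : u.eval p.1 H = p.2 := by
  induction x generalizing H with
  | tru => simp [epath] at hp
  | atom a =>
    simp only [epath, List.head?_cons, Option.mem_def, Option.some.injEq] at hp
    subst hp
    rfl
  | neg x ih => exact ih hp
  | con x y ihx ihy =>
    by_cases hx : u.fEval x H
    · simp only [epath, hx, if_true, List.head?_append, Option.mem_def, Option.or_eq_some_iff] at hp
      rcases hp with hp | ⟨hnil, hp⟩
      · exact ihx hp
      · rw [List.head?_eq_none_iff] at hnil
        rw [← fDeriv_eq_self_of_epath_eq_nil hnil]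
        exact ihy hp
    · simp only [epath, hx] at hp
      exact ihx hp

theorem RepProof.eval_fDeriv_of_mem_getLast?_epath (hu : u.RepProof)
    {x : Fm A} {H : u.V} {p : A × Bool} (hp : p ∈ (u.epath x H).getLast?) :
    u.eval p.1 (u.fDeriv x H) = p.2 := by
  induction x generalizing H with
  | tru => simp [epath] at hp
  | atom a =>
    simp only [epath, List.getLast?_singleton, Option.mem_def, Option.some.injEq] at hp
    subst hp
    exact hu a H
  | neg x ih => exact ih hp
  | con x y ihx ihy =>
    rw [fDeriv_con]
    by_cases hx : u.fEval x H
    · simp only [epath, hx, if_true, List.getLast?_append, Option.mem_def] at hp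
      rw [if_pos hx]
      cases hy : u.epath y (u.fDeriv x H) with
      | nil =>
        rw [fDeriv_eq_self_of_epath_eq_nil hy]
        exact ihx (by simpa [hy] using hp)
      | cons q Q => exact ihy (by simpa [hy] using hp)
    · simp only [epath, hx] at hp
      simpa [hx] using ihx hp

theorem RepProof.repProofPath_epath (hu : u.RepProof) (x : Fm A) (H : u.V) :
    RepProofPath (u.epath x H) := by
  induction x generalizing H with
  | tru | atom _ => trivial
  | neg x ih => exact ih H
  | con x y ihx ihy =>
    by_cases hx : u.fEval x H
    · simp only [epath, hx, if_true, repProofPath_iff_isChain] at ihx ihy ⊢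
      refine (ihx H).append (ihy _) fun p hp q hq hpq => ?_
      rw [← hu.eval_fDeriv_of_mem_getLast?_epath hp, ← eval_of_mem_head?_epath hq, hpq]
    · simpa [epath, hx] using ihx H

theorem Memorizing.deriv_fDeriv_of_deriv_eq_self (hu : u.Memorizing)
    {a : A} {K : u.V} (hK : u.deriv a K = K) (y : Fm A) :
    u.deriv a (u.fDeriv y K) = u.fDeriv y K ∧ u.eval a (u.fDeriv y K) = u.eval a K := by
  obtain ⟨-, hev, hdr⟩ := hu
  induction y generalizing K with
  | tru => exact ⟨hK, rfl⟩
  | atom b =>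
    have hd := hdr a b K
    have he := hev a b K
    rw [hK] at hd he
    exact ⟨hd, he⟩
  | neg y ih => exact ih hK
  | con y z ihy ihz =>
    rw [fDeriv_con]
    split
    · obtain ⟨hy, hy'⟩ := ihy hK
      obtain ⟨hz, hz'⟩ := ihz hy
      exact ⟨hz, hz'.trans hy'⟩
    · exact ihy hK

theorem Memorizing.fDeriv_absorbs_of_mem_epath (hu : u.Memorizing)
    {x : Fm A} {H : u.V} {a : A} {b : Bool} (hab : (a, b) ∈ u.epath x H) :
    u.deriv a (u.fDeriv x H) = u.fDeriv x H ∧ u.eval a (u.fDeriv x H) = b := by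
  induction x generalizing H with
  | tru => simp [epath] at hab
  | atom c =>
    simp only [epath, List.mem_singleton, Prod.mk.injEq] at hab
    obtain ⟨rfl, rfl⟩ := hab
    exact ⟨hu.1.2 a H, hu.1.1 a H⟩
  | neg x ih => exact ih hab
  | con x y ihx ihy =>
    rw [fDeriv_con]
    by_cases hx : u.fEval x H
    · simp only [epath, hx, if_true, List.mem_append] at hab
      rw [if_pos hx]
      rcases hab with hab | hab
      · obtain ⟨hd, he⟩ := ihx hab
        obtain ⟨hd', he'⟩ := hu.deriv_fDeriv_of_deriv_eq_self hd y
        exact ⟨hd', he'.trans he⟩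
      · exact ihy hab
    · simp only [epath, hx] at hab
      simpa [hx] using ihx hab

theorem Memorizing.memPath_epath (hu : u.Memorizing) (x : Fm A) (H : u.V) :
    MemPath (u.epath x H) := fun _ _ _ hb hc =>
  (hu.fDeriv_absorbs_of_mem_epath hb).2.symm.trans (hu.fDeriv_absorbs_of_mem_epath hc).2

end ValAlg

/-- If `V` is repetition-proof then `x ⋄ H` is repetition-proof;
if `V` is memorizing then `x ⋄ H` is memorizing. -/
theorem stmt_16 {A : Type} (u : ValAlg A) (x : Fm A) (H : u.V) :
    (u.RepProof → RepProofPath (u.epath x H)) ∧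
    (u.Memorizing → MemPath (u.epath x H)) :=
  ⟨fun hu => hu.repProofPath_epath x H, fun hu => hu.memPath_epath x H⟩
end
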